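/- arXiv:0904.2960 — 5 statements merged into one kernel-verified Lean document; each statement's English description precedes it below -/
import Mathlib

section
/- Let S be a real d×d' matrix and let v : ℝ_{>0}^d → ℝ^{d'} be continuously differentiable with v'(x) entrywise nonnegative for all x in the positive orthant, satisfying the reaction form condition: the partial derivative ∂v_j/∂x_i is not identically zero if and only if S_{ij} < 0. If S contains no 2×2 submatrix whose sign pattern, up to permutation of rows and columns, equals [[+,-],[-,-]], then for every pair (i,j), the entry (S v'(x))_{ij} has the same sign (≥0 everywhere or ≤0 everywhere) for all x in the positive orthant. -/
/-!
Only the reactions consuming species `j` (those `k` with `S j k < 0`) contribute to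
column `j` of `S v'(x)`, and they do so with the nonnegative weights `∂v_k/∂x_j`. The
absence of the pattern `[[+,-],[-,-]]` guarantees that, on these reactions, row `i`
of `S` never takes both signs; so every term of `(S v'(x))_{ij}` has one sign, fixed
independently of `x`.
-/

/-- The 2×2 sign pattern with one positive and three negative entries
(the pattern `[[+,-],[-,-]]` up to permutation of rows and columns). -/
def BadPattern3 (a b c d : ℝ) : Prop :=
  (0 < a ∧ b < 0 ∧ c < 0 ∧ d < 0) ∨ (a < 0 ∧ 0 < b ∧ c < 0 ∧ d < 0) ∨
  (a < 0 ∧ b < 0 ∧ 0 < c ∧ d < 0) ∨ (a < 0 ∧ b < 0 ∧ c < 0 ∧ 0 < d)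

theorem Matrix.sign_constant_on_negatives_of_forall_not_badPattern3 {ι κ : Type*}
    (S : Matrix ι κ ℝ)
    (hbad : ∀ i j : ι, ∀ k l : κ, i ≠ j → k ≠ l →
      ¬ BadPattern3 (S i k) (S i l) (S j k) (S j l)) (i j : ι) :
    (∀ k, S j k < 0 → 0 ≤ S i k) ∨ (∀ k, S j k < 0 → S i k ≤ 0) := by
  by_contra! h
  obtain ⟨⟨k, hjk, hik⟩, ⟨l, hjl, hil⟩⟩ := h
  have hij : i ≠ j := by rintro rfl; linarith
  have hkl : l ≠ k := by rintro rfl; linarith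
  exact hbad i j l k hij hkl (Or.inl ⟨hil, hik, hjl, hjk⟩)

variable {ι κ ι' : Type*} [Fintype κ]

theorem Matrix.mul_apply_nonneg_of_nonneg_on_support {S : Matrix ι κ ℝ} {M : Matrix κ ι' ℝ}
    {i : ι} {j : ι'} (hM : ∀ k, 0 ≤ M k j) (hS : ∀ k, M k j ≠ 0 → 0 ≤ S i k) :
    0 ≤ (S * M) i j := by
  refine Finset.sum_nonneg fun k _ => ?_
  by_cases hk : M k j = 0
  · simp [hk]
  · exact mul_nonneg (hS k hk) (hM k)

theorem Matrix.mul_apply_nonpos_of_nonpos_on_support {S : Matrix ι κ ℝ} {M : Matrix κ ι' ℝ}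
    {i : ι} {j : ι'} (hM : ∀ k, 0 ≤ M k j) (hS : ∀ k, M k j ≠ 0 → S i k ≤ 0) :
    (S * M) i j ≤ 0 := by
  refine Finset.sum_nonpos fun k _ => ?_
  by_cases hk : M k j = 0
  · simp [hk]
  · exact mul_nonpos_of_nonpos_of_nonneg (hS k hk) (hM k)

theorem jacobian_sign_pattern_of_no_bad_submatrix_general {d d' : ℕ}
    (S : Matrix (Fin d) (Fin d') ℝ)
    (J : (Fin d → ℝ) → Matrix (Fin d') (Fin d) ℝ)
    -- the fluxes are monotone nondecreasing: `v'(x)` is entrywise nonnegative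
    (hmono : ∀ x : Fin d → ℝ, (∀ a, 0 < x a) → ∀ j i, 0 ≤ J x j i)
    -- reaction form: `∂v_j/∂x_i` is not identically zero iff `S i j < 0`
    (hreact : ∀ (i : Fin d) (j : Fin d'),
      (¬ ∀ x : Fin d → ℝ, (∀ a, 0 < x a) → J x j i = 0) ↔ S i j < 0)
    -- no bad 2×2 submatrix
    (hbad : ∀ i j : Fin d, ∀ k l : Fin d', i ≠ j → k ≠ l →
      ¬ BadPattern3 (S i k) (S i l) (S j k) (S j l)) :
    ∀ i j : Fin d,
      (∀ x : Fin d → ℝ, (∀ a, 0 < x a) → 0 ≤ (S * J x) i j) ∨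
      (∀ x : Fin d → ℝ, (∀ a, 0 < x a) → (S * J x) i j ≤ 0) := by
  intro i j
  have hsupp : ∀ x : Fin d → ℝ, (∀ a, 0 < x a) → ∀ k, J x k j ≠ 0 → S j k < 0 :=
    fun x hx k hne => (hreact j k).1 fun h => hne (h x hx)
  rcases S.sign_constant_on_negatives_of_forall_not_badPattern3 hbad i j with h | h
  · exact .inl fun x hx => Matrix.mul_apply_nonneg_of_nonneg_on_support
      (hmono x hx · j) fun k hk => h k (hsupp x hx k hk)
  · exact .inr fun x hx => Matrix.mul_apply_nonpos_of_nonpos_on_support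
      (hmono x hx · j) fun k hk => h k (hsupp x hx k hk)

/-- If the stoichiometric matrix `S` of a reaction form ODE with monotone
nondecreasing fluxes contains no 2×2 submatrix whose sign pattern, up to
permutation of rows and columns, equals `[[+,-],[-,-]]`, then each entry of the
Jacobian `S v'(x)` has the same sign for all `x` in the positive orthant. -/
theorem jacobian_sign_pattern_of_no_bad_submatrix {d d' : ℕ}
    (S : Matrix (Fin d) (Fin d') ℝ)
    (v : (Fin d → ℝ) → (Fin d' → ℝ))
    (J : (Fin d → ℝ) → Matrix (Fin d') (Fin d) ℝ)
    -- `J x` is the Jacobian `v'(x)` of the continuously differentiable `v` at `x`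
    (hderiv : ∀ x : Fin d → ℝ, (∀ a, 0 < x a) →
      HasFDerivAt v (LinearMap.toContinuousLinearMap ((J x).mulVecLin)) x)
    -- the fluxes are monotone nondecreasing: `v'(x)` is entrywise nonnegative
    (hmono : ∀ x : Fin d → ℝ, (∀ a, 0 < x a) → ∀ j i, 0 ≤ J x j i)
    -- reaction form: `∂v_j/∂x_i` is not identically zero iff `S i j < 0`
    (hreact : ∀ (i : Fin d) (j : Fin d'),
      (¬ ∀ x : Fin d → ℝ, (∀ a, 0 < x a) → J x j i = 0) ↔ S i j < 0)
    -- no bad 2×2 submatrix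
    (hbad : ∀ i j : Fin d, ∀ k l : Fin d', i ≠ j → k ≠ l →
      ¬ BadPattern3 (S i k) (S i l) (S j k) (S j l)) :
    ∀ i j : Fin d,
      (∀ x : Fin d → ℝ, (∀ a, 0 < x a) → 0 ≤ (S * J x) i j) ∨
      (∀ x : Fin d → ℝ, (∀ a, 0 < x a) → (S * J x) i j ≤ 0) :=
  jacobian_sign_pattern_of_no_bad_submatrix_general S J hmono hreact hbad
end

section
/- Let S be a real d×d' matrix and let Š be the (d+1)×(d'+1) matrix obtained from S by the sign fixing step: choose a column ℓ and row p with S_{pℓ} > 0; Š agrees with S except that Š_{pℓ} = 0, the new row d+1 has a 1 in column ℓ, the entry -1 in column d'+1, and zeros elsewhere, and the new column d'+1 has S_{pℓ} in row p and zeros in rows 1,...,d except row p. Then dim ker Š = dim ker S and dim ker Š^t = dim ker S^t. -/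
open Matrix

/-- The sign fixing step applied to `S` at the position `(p, l)`:
the entry at `(p, l)` is zeroed out, the new row `d+1` is `e_l - e_{d'+1}`,
and the new column `d'+1` has `S p l` in row `p` and zeros elsewhere. -/
def signFixMat {d d' : ℕ} (S : Matrix (Fin d) (Fin d') ℝ) (p : Fin d) (l : Fin d') :
    Matrix (Fin (d + 1)) (Fin (d' + 1)) ℝ :=
  Matrix.of fun i j =>
    if hi : (i : ℕ) < d then
      if hj : (j : ℕ) < d' then
        if (i : ℕ) = (p : ℕ) ∧ (j : ℕ) = (l : ℕ) then 0 else S ⟨i, hi⟩ ⟨j, hj⟩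
      else if (i : ℕ) = (p : ℕ) then S p l else 0
    else
      if hj : (j : ℕ) < d' then (if (j : ℕ) = (l : ℕ) then 1 else 0)
      else -1

/-! The kernel of `signFixMat S p l` consists exactly of the vectors `(x, x l)` with `S x = 0`:
the new row forces the new coordinate to equal `x l`, and then the new column restores the
entry `S p l` that was zeroed out. Dually, its left kernel consists of the `(y, S p l * y p)` with
`Sᵀ y = 0`. Both kernels are thus images of the old ones under the injective map
`x ↦ (x, c x)` for a linear form `c`, so their dimensions agree. -/

section SnocGraph

variable {R : Type*} [Semiring R] {n : ℕ}

def snocGraph (c : (Fin n → R) →ₗ[R] R) : (Fin n → R) →ₗ[R] (Fin (n + 1) → R) where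
  toFun x := Fin.snoc x (c x)
  map_add' x y := by
    ext j
    refine Fin.lastCases ?_ (fun i => ?_) j <;> simp
  map_smul' r x := by
    ext j
    refine Fin.lastCases ?_ (fun i => ?_) j <;> simp

theorem snocGraph_injective (c : (Fin n → R) →ₗ[R] R) : Function.Injective (snocGraph c) :=
  fun x y h => by simpa [snocGraph] using congrArg Fin.init h

theorem mem_map_snocGraph {c : (Fin n → R) →ₗ[R] R} {W : Submodule R (Fin n → R)}
    {v : Fin (n + 1) → R} :
    v ∈ W.map (snocGraph c) ↔ Fin.init v ∈ W ∧ v (Fin.last n) = c (Fin.init v) := by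
  constructor
  · rintro ⟨x, hx, rfl⟩
    simpa [snocGraph] using hx
  · rintro ⟨hW, hlast⟩
    refine ⟨Fin.init v, hW, ?_⟩
    rw [snocGraph, LinearMap.coe_mk, AddHom.coe_mk, ← hlast, Fin.snoc_init_self]

theorem finrank_eq_of_mem_iff_init_mem {V : Submodule R (Fin (n + 1) → R)}
    {W : Submodule R (Fin n → R)} (c : (Fin n → R) →ₗ[R] R)
    (h : ∀ v, v ∈ V ↔ Fin.init v ∈ W ∧ v (Fin.last n) = c (Fin.init v)) :
    Module.finrank R V = Module.finrank R W := by
  have hV : V = W.map (snocGraph c) := by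
    ext v
    rw [h, mem_map_snocGraph]
  rw [hV]
  exact (Submodule.equivMapOfInjective _ (snocGraph_injective c) W).finrank_eq.symm

theorem eq_zero_iff_init_eq_zero_and_last_eq_zero (u : Fin (n + 1) → R) :
    u = 0 ↔ Fin.init u = 0 ∧ u (Fin.last n) = 0 := by
  simp only [funext_iff, Fin.forall_fin_succ', Fin.init, Pi.zero_apply]

end SnocGraph

namespace signFixMat

variable {d d' : ℕ} (S : Matrix (Fin d) (Fin d') ℝ) (p : Fin d) (l : Fin d')

theorem apply_castSucc_castSucc (i : Fin d) (j : Fin d') :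
    signFixMat S p l i.castSucc j.castSucc = S i j - single p l (S p l) i j := by
  simp only [signFixMat, of_apply, Fin.val_castSucc, i.isLt, j.isLt, dite_true, Fin.val_eq_val,
    single_apply]
  split_ifs <;> simp_all

theorem apply_castSucc_last (i : Fin d) :
    signFixMat S p l i.castSucc (Fin.last d') = (Pi.single p (S p l) : Fin d → ℝ) i := by
  simp [signFixMat, Fin.val_eq_val, Fin.last, Pi.single_apply]

theorem apply_last_castSucc (j : Fin d') :
    signFixMat S p l (Fin.last d) j.castSucc = (Pi.single l 1 : Fin d' → ℝ) j := by
  simp [signFixMat, Fin.val_eq_val, Fin.last, Pi.single_apply]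

theorem apply_last_last : signFixMat S p l (Fin.last d) (Fin.last d') = -1 := by
  simp [signFixMat, Fin.last]

theorem init_mulVec (v : Fin (d' + 1) → ℝ) :
    Fin.init (signFixMat S p l *ᵥ v)
      = S *ᵥ Fin.init v + (v (Fin.last d') - v l.castSucc) • Pi.single p (S p l) := by
  ext i
  simp only [Fin.init, mulVec, dotProduct, Fin.sum_univ_castSucc, Pi.add_apply, Pi.smul_apply,
    smul_eq_mul, apply_castSucc_castSucc, apply_castSucc_last, sub_mul, Finset.sum_sub_distrib,
    single_apply]
  rcases eq_or_ne i p with rfl | hip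
  · simp only [true_and, ite_mul, zero_mul, Finset.sum_ite_eq, Finset.mem_univ, if_true,
      Pi.single_eq_same]
    ring
  · simp [hip, hip.symm]

theorem mulVec_last (v : Fin (d' + 1) → ℝ) :
    (signFixMat S p l *ᵥ v) (Fin.last d) = v l.castSucc - v (Fin.last d') := by
  simp only [mulVec, dotProduct, Fin.sum_univ_castSucc, apply_last_castSucc, apply_last_last,
    Pi.single_apply, ite_mul, one_mul, zero_mul, neg_mul, Finset.sum_ite_eq', Finset.mem_univ,
    if_true]
  ring

theorem init_transpose_mulVec (w : Fin (d + 1) → ℝ) :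
    Fin.init ((signFixMat S p l)ᵀ *ᵥ w)
      = Sᵀ *ᵥ Fin.init w + (w (Fin.last d) - S p l * w p.castSucc) • Pi.single l 1 := by
  ext j
  simp only [Fin.init, mulVec, dotProduct, Fin.sum_univ_castSucc, Pi.add_apply, Pi.smul_apply,
    smul_eq_mul, transpose_apply, apply_castSucc_castSucc, apply_last_castSucc, sub_mul,
    Finset.sum_sub_distrib, single_apply]
  rcases eq_or_ne j l with rfl | hjl
  · simp only [and_true, ite_mul, zero_mul, one_mul, mul_one, Finset.sum_ite_eq,
      Finset.mem_univ, if_true, Pi.single_eq_same]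
    ring
  · simp [hjl, hjl.symm]

theorem transpose_mulVec_last (w : Fin (d + 1) → ℝ) :
    ((signFixMat S p l)ᵀ *ᵥ w) (Fin.last d') = S p l * w p.castSucc - w (Fin.last d) := by
  simp only [mulVec, dotProduct, transpose_apply, Fin.sum_univ_castSucc, apply_castSucc_last,
    apply_last_last, Pi.single_apply, ite_mul, one_mul, zero_mul, neg_mul, Finset.sum_ite_eq',
    Finset.mem_univ, if_true]
  ring

theorem mulVec_eq_zero_iff (v : Fin (d' + 1) → ℝ) :
    signFixMat S p l *ᵥ v = 0 ↔ S *ᵥ Fin.init v = 0 ∧ v (Fin.last d') = v l.castSucc := by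
  rw [eq_zero_iff_init_eq_zero_and_last_eq_zero, init_mulVec, mulVec_last, sub_eq_zero,
    eq_comm (a := v l.castSucc)]
  refine and_congr_left fun hv => ?_
  rw [hv, sub_self, zero_smul, add_zero]

theorem transpose_mulVec_eq_zero_iff (w : Fin (d + 1) → ℝ) :
    (signFixMat S p l)ᵀ *ᵥ w = 0 ↔
      Sᵀ *ᵥ Fin.init w = 0 ∧ w (Fin.last d) = S p l * w p.castSucc := by
  rw [eq_zero_iff_init_eq_zero_and_last_eq_zero, init_transpose_mulVec, transpose_mulVec_last,
    sub_eq_zero, eq_comm (a := S p l * _)]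
  refine and_congr_left fun hw => ?_
  rw [hw, sub_self, zero_smul, add_zero]

end signFixMat

theorem signFix_ker_dims_general {d d' : ℕ} (S : Matrix (Fin d) (Fin d') ℝ)
    (p : Fin d) (l : Fin d') :
    Module.finrank ℝ (LinearMap.ker (signFixMat S p l).mulVecLin)
      = Module.finrank ℝ (LinearMap.ker S.mulVecLin) ∧
    Module.finrank ℝ (LinearMap.ker (signFixMat S p l)ᵀ.mulVecLin)
      = Module.finrank ℝ (LinearMap.ker Sᵀ.mulVecLin) := by
  constructor
  · refine finrank_eq_of_mem_iff_init_mem (LinearMap.proj l) fun v => ?_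
    simp only [LinearMap.mem_ker, mulVecLin_apply]
    exact signFixMat.mulVec_eq_zero_iff S p l v
  · refine finrank_eq_of_mem_iff_init_mem (S p l • LinearMap.proj p) fun w => ?_
    simp only [LinearMap.mem_ker, mulVecLin_apply]
    exact signFixMat.transpose_mulVec_eq_zero_iff S p l w

/-- Sign fixing preserves the dimensions of the kernel and of the left kernel. -/
theorem signFix_ker_dims {d d' : ℕ} (S : Matrix (Fin d) (Fin d') ℝ)
    (p : Fin d) (l : Fin d') (hpl : 0 < S p l) :
    Module.finrank ℝ (LinearMap.ker (signFixMat S p l).mulVecLin)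
      = Module.finrank ℝ (LinearMap.ker S.mulVecLin) ∧
    Module.finrank ℝ (LinearMap.ker (signFixMat S p l)ᵀ.mulVecLin)
      = Module.finrank ℝ (LinearMap.ker Sᵀ.mulVecLin) :=
  signFix_ker_dims_general S p l
end

section
/- With S and Š as in the sign fixing step: if there exists m ∈ ℝ^d with all entries strictly positive and m^t S = 0, then there exists m̌ ∈ ℝ^{d+1} with all entries strictly positive and m̌^t Š = 0. In other words, if S is conserving then so is Š. -/
open Matrix

/-! Extend `m` by the entry `m p * S p l`. Zeroing `S p l` removes `m p * S p l` from the
balance of column `l`, which the new row `e_l - e_{d'+1}` restores, and the new column reads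
`m p * S p l - m'_{d+1} = 0`. -/

section SignFix

variable {d d' : ℕ} (S : Matrix (Fin d) (Fin d') ℝ) (p : Fin d) (l : Fin d')

lemma signFixMat_castSucc_castSucc (i : Fin d) (j : Fin d') :
    signFixMat S p l i.castSucc j.castSucc = if i = p ∧ j = l then 0 else S i j := by
  simp [signFixMat, Fin.ext_iff]

lemma signFixMat_castSucc_last (i : Fin d) :
    signFixMat S p l i.castSucc (Fin.last d') = if i = p then S p l else 0 := by
  simp [signFixMat, Fin.ext_iff]

lemma signFixMat_last_castSucc (j : Fin d') :
    signFixMat S p l (Fin.last d) j.castSucc = if j = l then 1 else 0 := by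
  simp [signFixMat, Fin.ext_iff]

lemma signFixMat_last_last : signFixMat S p l (Fin.last d) (Fin.last d') = -1 := by
  simp [signFixMat]

variable (m : Fin d → ℝ) (c : ℝ)

lemma vecMul_signFixMat_castSucc (j : Fin d') :
    (Fin.snoc m c ᵥ* signFixMat S p l) j.castSucc
      = (m ᵥ* S) j + if j = l then c - m p * S p l else 0 := by
  simp only [vecMul, dotProduct, Fin.sum_univ_castSucc, Fin.snoc_castSucc, Fin.snoc_last,
    signFixMat_castSucc_castSucc, signFixMat_last_castSucc]
  by_cases hjl : j = l
  · have hsplit : ∀ i, m i * (if i = p ∧ j = l then 0 else S i j)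
        = m i * S i j - if i = p then m p * S p l else 0 := by
      intro i
      by_cases hip : i = p <;> simp [hip, hjl]
    simp only [hsplit, Finset.sum_sub_distrib, Finset.sum_ite_eq', Finset.mem_univ, if_true,
      if_pos hjl]
    ring
  · simp [hjl]

lemma vecMul_signFixMat_last :
    (Fin.snoc m c ᵥ* signFixMat S p l) (Fin.last d') = m p * S p l - c := by
  simp only [vecMul, dotProduct, Fin.sum_univ_castSucc, Fin.snoc_castSucc, Fin.snoc_last,
    signFixMat_castSucc_last, signFixMat_last_last, mul_ite, mul_zero, Finset.sum_ite_eq',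
    Finset.mem_univ, if_true]
  ring

end SignFix

/-- If `S` is conserving (there is a strictly positive vector in the left
kernel of `S`), then so is its sign fixing matrix. -/
theorem signFix_conserving {d d' : ℕ} (S : Matrix (Fin d) (Fin d') ℝ)
    (p : Fin d) (l : Fin d') (hpl : 0 < S p l)
    (m : Fin d → ℝ) (hm : ∀ i, 0 < m i) (hker : Sᵀ.mulVec m = 0) :
    ∃ m' : Fin (d + 1) → ℝ, (∀ i, 0 < m' i) ∧ (signFixMat S p l)ᵀ.mulVec m' = 0 := by
  rw [mulVec_transpose] at hker
  refine ⟨Fin.snoc m (m p * S p l), fun i => ?_, ?_⟩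
  · induction i using Fin.lastCases with
    | last => simpa using mul_pos (hm p) hpl
    | cast i => simpa using hm i
  · rw [mulVec_transpose]
    funext j
    induction j using Fin.lastCases with
    | last => simp [vecMul_signFixMat_last]
    | cast j => simp [vecMul_signFixMat_castSucc, hker]
end

section
/- Let J be a real d×d matrix, s ∈ ℝ, w = (w_1, ..., w_d) ∈ ℝ^d a row vector, and for k > 0 define the (d+1)×(d+1) matrix J̌_k whose top-left d×d block is J minus (s·e_d)·w added to row d (explicitly: rows 1..d-1 of J̌_k are rows of J with a 0 appended; row d is (J_{d,1}-s·w_1, ..., J_{d,d}-s·w_d, k·s); row d+1 is (w_1, ..., w_d, -k)). Let c(λ) = det(J - λI) and c_k(λ) = det(J̌_k - λI). Then there is a polynomial h(λ) of degree at most d-1, independent of k, such that c_k(λ) = (-k - λ)·c(λ) + s·λ·h(λ). -/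
/- Expand `det (J̌_k - λI)` along its last column, whose only nonzero entries are `k·s` in row
`d` and `-k - λ` in row `d + 1`. Deleting row `d + 1` leaves `J - λI` with `s·w` subtracted
from its last row, of determinant `c - s·h` by multilinearity; deleting row `d` leaves `J - λI`
with last row `w`, of determinant `h`. Hence `c_k = (-k - λ)(c - s·h) + k·s·h`, which is the
claim. The bound `deg h < d` holds because the matrix of `h` is `λ·A + B` with a zero row in
`A`, so its coefficient of `λ^d`, namely `det A`, vanishes. -/

open Matrix Polynomial

/-- The Jacobian of the sign fixed CRN: rows `0, …, n-1` are those of `J` with a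
zero appended; row `n` (the last row of `J`) is `(J_{n,·} - s·w, k·s)`; the new
row `n+1` is `(w, -k)`. -/
def signFixJac {n : ℕ} (J : Matrix (Fin (n + 1)) (Fin (n + 1)) ℝ)
    (s k : ℝ) (w : Fin (n + 1) → ℝ) :
    Matrix (Fin (n + 2)) (Fin (n + 2)) ℝ :=
  Matrix.of fun i j =>
    if hi : (i : ℕ) < n + 1 then
      if hj : (j : ℕ) < n + 1 then
        J ⟨i, hi⟩ ⟨j, hj⟩ - (if (i : ℕ) = n then s * w ⟨j, hj⟩ else 0)
      else (if (i : ℕ) = n then k * s else 0)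
    else
      if hj : (j : ℕ) < n + 1 then w ⟨j, hj⟩ else -k

/-- The characteristic-type polynomial `det (M - λ·I)` of a square matrix. -/
noncomputable def detLam {m : ℕ} (M : Matrix (Fin m) (Fin m) ℝ) : Polynomial ℝ :=
  (M.map Polynomial.C - (Polynomial.X : Polynomial ℝ) • (1 : Matrix (Fin m) (Fin m) (Polynomial ℝ))).det

theorem natDegree_det_X_add_C_updateRow_C_le {ι R : Type*} [Fintype ι] [DecidableEq ι]
    [CommRing R] (A B : Matrix ι ι R) (i : ι) (v : ι → R) :
    (((X : R[X]) • A.map C + B.map C).updateRow i (fun j => C (v j))).det.natDegree ≤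
      Fintype.card ι - 1 := by
  have hsplit : ((X : R[X]) • A.map C + B.map C).updateRow i (fun j => C (v j)) =
      (X : R[X]) • (A.updateRow i 0).map C + (B.updateRow i v).map C := by
    ext a b
    by_cases ha : a = i
    · subst ha; simp
    · simp [updateRow_ne ha]
  rw [hsplit]
  refine natDegree_le_pred (natDegree_det_X_add_C_le _ _) ?_
  rw [coeff_det_X_add_C_card, det_eq_zero_of_row_eq_zero i (by simp)]

theorem det_succ_succ_of_lastCol_eq_zero {R : Type*} [CommRing R] {m : ℕ}
    (N : Matrix (Fin (m + 2)) (Fin (m + 2)) R)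
    (hN : ∀ i : Fin m, N i.castSucc.castSucc (Fin.last (m + 1)) = 0) :
    N.det = N (Fin.last _) (Fin.last _) * (N.submatrix Fin.castSucc Fin.castSucc).det -
      N (Fin.last m).castSucc (Fin.last _) *
        (N.submatrix (Fin.last m).castSucc.succAbove Fin.castSucc).det := by
  rw [det_succ_column N (Fin.last _), Fin.sum_univ_castSucc, Fin.sum_univ_castSucc]
  have hsign : ((-1 : R) ^ (m + (m + 1))) = -1 := by
    rw [← add_assoc, ← two_mul, pow_succ, pow_mul, neg_one_sq, one_pow, one_mul]
  simp only [Fin.val_castSucc, Fin.val_last, hN, mul_zero, Fin.succAbove_last, zero_mul,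
    Finset.sum_const_zero, hsign, neg_mul, one_mul, zero_add, ← two_mul, pow_mul, even_two,
    Even.neg_pow, one_pow]
  ring

noncomputable def lamMat {ι : Type*} [DecidableEq ι] (M : Matrix ι ι ℝ) : Matrix ι ι ℝ[X] :=
  M.map C - (X : ℝ[X]) • 1

@[simp]
theorem lamMat_apply {ι : Type*} [DecidableEq ι] (M : Matrix ι ι ℝ) (i j : ι) :
    lamMat M i j = C (M i j) - if i = j then X else 0 := by
  simp [lamMat, one_apply]

theorem detLam_eq_det_lamMat {m : ℕ} (M : Matrix (Fin m) (Fin m) ℝ) :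
    detLam M = (lamMat M).det :=
  rfl

noncomputable def detLamUpdateLastRow {n : ℕ} (J : Matrix (Fin (n + 1)) (Fin (n + 1)) ℝ)
    (w : Fin (n + 1) → ℝ) : ℝ[X] :=
  ((lamMat J).updateRow (Fin.last n) (fun j => C (w j))).det

theorem natDegree_detLamUpdateLastRow_le {n : ℕ} (J : Matrix (Fin (n + 1)) (Fin (n + 1)) ℝ)
    (w : Fin (n + 1) → ℝ) : (detLamUpdateLastRow J w).natDegree ≤ n := by
  have hlin : lamMat J = (X : ℝ[X]) • (-1 : Matrix (Fin (n + 1)) (Fin (n + 1)) ℝ).map C +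
      J.map C := by
    rw [lamMat, Matrix.map_neg _ (map_neg C), Matrix.map_one C (map_zero C) (map_one C),
      smul_neg, sub_eq_neg_add]
  simpa [detLamUpdateLastRow, hlin] using natDegree_det_X_add_C_updateRow_C_le (-1) J _ w

section signFixJac

variable {n : ℕ} (J : Matrix (Fin (n + 1)) (Fin (n + 1)) ℝ) (s k : ℝ) (w : Fin (n + 1) → ℝ)

@[simp]
theorem signFixJac_castSucc_castSucc (i j : Fin (n + 1)) :
    signFixJac J s k w i.castSucc j.castSucc =
      J i j - if i = Fin.last n then s * w j else 0 := by
  simp [signFixJac, Fin.ext_iff, Fin.is_le]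

@[simp]
theorem signFixJac_castSucc_last (i : Fin (n + 1)) :
    signFixJac J s k w i.castSucc (Fin.last _) = if i = Fin.last n then k * s else 0 := by
  simp [signFixJac, Fin.ext_iff, Fin.is_le]

@[simp]
theorem signFixJac_last_castSucc (j : Fin (n + 1)) :
    signFixJac J s k w (Fin.last _) j.castSucc = w j := by
  simp [signFixJac, Fin.is_le]

@[simp]
theorem signFixJac_last_last : signFixJac J s k w (Fin.last _) (Fin.last _) = -k := by
  simp [signFixJac]

theorem det_lamMat_signFixJac_submatrix_castSucc :
    ((lamMat (signFixJac J s k w)).submatrix Fin.castSucc Fin.castSucc).det =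
      detLam J - C s * detLamUpdateLastRow J w := by
  have hrow : (lamMat (signFixJac J s k w)).submatrix Fin.castSucc Fin.castSucc =
      (lamMat J).updateRow (Fin.last n) (lamMat J (Fin.last n) + (-C s) • fun j => C (w j)) := by
    refine Matrix.ext fun i j => ?_
    by_cases hi : i = Fin.last n
    · subst hi
      simp only [submatrix_apply, lamMat_apply, signFixJac_castSucc_castSucc, ↓reduceIte,
        map_sub, map_mul, Fin.castSucc_inj, updateRow_self, Pi.add_apply, Pi.smul_apply,
        smul_eq_mul]
      ring
    · simp [hi]
  rw [hrow, det_updateRow_add, updateRow_eq_self, det_updateRow_smul, detLam_eq_det_lamMat,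
    detLamUpdateLastRow, neg_mul, ← sub_eq_add_neg]

theorem det_lamMat_signFixJac_submatrix_succAbove :
    ((lamMat (signFixJac J s k w)).submatrix (Fin.last n).castSucc.succAbove
      Fin.castSucc).det = detLamUpdateLastRow J w := by
  congr 1
  refine Matrix.ext fun i j => ?_
  induction i using Fin.lastCases with
  | last => simp [Fin.ext_iff, (Fin.is_le j).trans_lt n.lt_succ_self |>.ne']
  | cast i => simp [Fin.succAbove_castSucc_of_lt _ _ (Fin.castSucc_lt_last i)]

end signFixJac

/-- There is a polynomial `h` of degree at most `d - 1`, independent of `k`,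
with `c_k(λ) = (-k - λ)·c(λ) + s·λ·h(λ)`, where `c(λ) = det (J - λI)` and
`c_k(λ) = det (J̌_k - λI)`. -/
theorem signFixJac_charpoly_identity {n : ℕ}
    (J : Matrix (Fin (n + 1)) (Fin (n + 1)) ℝ) (s : ℝ) (w : Fin (n + 1) → ℝ) :
    ∃ h : Polynomial ℝ, h.degree ≤ (n : ℕ) ∧ ∀ k : ℝ, 0 < k →
      detLam (signFixJac J s k w) =
        (- C k - X) * detLam J + C s * X * h := by
  refine ⟨detLamUpdateLastRow J w,
    degree_le_of_natDegree_le (natDegree_detLamUpdateLastRow_le J w), fun k _ => ?_⟩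
  have hcol (i : Fin n) : lamMat (signFixJac J s k w) i.castSucc.castSucc (Fin.last _) = 0 := by
    have hi := i.isLt
    simp only [lamMat_apply, signFixJac_castSucc_last, Fin.ext_iff, Fin.val_castSucc,
      Fin.val_last, hi.ne, ↓reduceIte, map_zero, zero_sub, neg_eq_zero, ite_eq_right_iff,
      X_ne_zero, imp_false]
    omega
  rw [detLam_eq_det_lamMat, det_succ_succ_of_lastCol_eq_zero _ hcol,
    det_lamMat_signFixJac_submatrix_castSucc, det_lamMat_signFixJac_submatrix_succAbove]
  simp only [lamMat_apply, signFixJac_last_last, signFixJac_castSucc_last, map_neg, map_mul,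
    ↓reduceIte, Fin.castSucc_ne_last, sub_zero]
  ring
end

section
/- Let S₁ be the stoichiometric matrix of a CRN with n₁ complexes, ℓ₁ linkage classes, and rank s₁, and let S₂ be obtained by one application of the sign fixing algorithm (adding species B' , replacing reaction p₁A+C₁ → p₂B+C₂ by p₁A+C₁ → B'+C₂ and adding B' → p₂B). Then the changes satisfy Δs = 1, 1 ≤ Δn ≤ 3, and Δℓ ≤ 2, where Δn = n₂ - n₁, Δℓ = ℓ₂ - ℓ₁, Δs = s₂ - s₁. -/
open Finset

/-- A chemical reaction network on a species set `σ`: a finite set of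
reactions, each a pair (source complex, target complex), complexes being
formal `ℕ`-linear combinations of species. -/
structure CRN (σ : Type) [DecidableEq σ] where
  reactions : Finset ((σ → ℕ) × (σ → ℕ))

variable {σ : Type} [DecidableEq σ] [Fintype σ]

/-- The set of complexes of a CRN. -/
def CRN.complexes (R : CRN σ) : Finset (σ → ℕ) :=
  R.reactions.image Prod.fst ∪ R.reactions.image Prod.snd

/-- `n`, the number of complexes. -/
def CRN.numComplexes (R : CRN σ) : ℕ := R.complexes.card

/-- The undirected graph on complexes whose edges are the reactions. -/
def CRN.linkGraph (R : CRN σ) : SimpleGraph {c // c ∈ R.complexes} :=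
  SimpleGraph.fromRel (fun a b => ((a : σ → ℕ), (b : σ → ℕ)) ∈ R.reactions)

/-- `ℓ`, the number of linkage classes (connected components of the graph on
complexes). -/
noncomputable def CRN.numLinkage (R : CRN σ) : ℕ :=
  Nat.card (R.linkGraph.ConnectedComponent)

/-- `s`, the rank of the stoichiometric matrix, i.e. the dimension of the span
of the reaction vectors. -/
noncomputable def CRN.srank (R : CRN σ) : ℕ :=
  Module.finrank ℝ (Submodule.span ℝ
    { v : σ → ℝ | ∃ r ∈ R.reactions, v = fun i => (r.2 i : ℝ) - (r.1 i : ℝ) })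

/-- The topological deficiency `δ = n - ℓ - s`. -/
noncomputable def CRN.deficiency (R : CRN σ) : ℤ :=
  (R.numComplexes : ℤ) - R.numLinkage - R.srank

/-- The complex `p • A` consisting of `p` copies of the single species `A`. -/
def mono (A : σ) (p : ℕ) : σ → ℕ := fun i => if i = A then p else 0

/-- Extend a complex by zero at the new species `B' = none`. -/
def extC (y : σ → ℕ) : Option σ → ℕ
  | none => 0
  | some i => y i

/-- The complex `B' + C₂`, where `B' = none` is the new species. -/
def extB' (C₂ : σ → ℕ) : Option σ → ℕ
  | none => 1
  | some i => C₂ i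

/-- The complex consisting of the new species `B'` alone. -/
def bPrime : Option σ → ℕ
  | none => 1
  | some _ => 0

/-- One step of the sign fixing algorithm on the CRN level: the reaction
`p₁A + C₁ → p₂B + C₂` is replaced by `p₁A + C₁ → B' + C₂` for a new species
`B'`, the reaction `B' → p₂B` is added, and all other reactions are kept. -/
def signFixCRN (R : CRN σ) (A B : σ) (p₁ p₂ : ℕ) (C₁ C₂ : σ → ℕ) :
    CRN (Option σ) :=
  ⟨((R.reactions.erase
        ((fun i => mono A p₁ i + C₁ i), (fun i => mono B p₂ i + C₂ i))).image
      (fun r => (extC r.1, extC r.2))) ∪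
    {(extC (fun i => mono A p₁ i + C₁ i), extB' C₂), (bPrime, extC (mono B p₂))}⟩

/-! Splitting the reaction `y → u + v` through a new species `B'` (here `u = p₂B`, `v = C₂`):

* rank: the two new reaction vectors add up to the old one, and only `B' → u` has a nonzero
  `B'`-coordinate, so the stoichiometric subspace grows by exactly one line;
* complexes: every new complex is an old one, `B'`, `B' + v` or `u`; the complex `B'` is always
  new, and either `u + v` survives (if `v = 0`) or `B' + v` is new;
* linkage classes: removing the edge `y — u + v` splits at most one class, the complexes
  `B' + v` and `u` join the classes of `y` and of `B'`, and `B'` may start a class of its own. -/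

namespace SimpleGraph

variable {V W : Type*} {G : SimpleGraph V} {f : V → W}

lemma Walk.apply_eq_or_exists_mem {S : Set V} (hf : ∀ x x', G.Adj x x' → x' ∉ S → f x = f x')
    {a b : V} (p : G.Walk a b) : f b = f a ∨ ∃ s ∈ S, f b = f s := by
  induction p with
  | nil => exact Or.inl rfl
  | @cons a c b hac p ih =>
    rcases ih with h | h
    · by_cases hc : c ∈ S
      · exact Or.inr ⟨c, hc, h⟩
      · exact Or.inl (h.trans (hf a c hac hc).symm)
    · exact Or.inr h

/-- The bound is `+ 2` rather than `+ 3` because `a` can be taken as the representative of its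
own component, so that `f a` is already counted there. -/
lemma card_le_card_connectedComponent_add_two [Finite V] {a b : V} {w₀ : W}
    (hf : ∀ x x', G.Adj x x' → x' ≠ a → x' ≠ b → f x = f x')
    (hcover : ∀ w, w ∈ Set.range f ∨ w = w₀) :
    Nat.card W ≤ Nat.card G.ConnectedComponent + 2 := by
  classical
  let rep : G.ConnectedComponent → V := fun K => if K = G.connectedComponentMk a then a else K.out
  have hrep : ∀ K, G.connectedComponentMk (rep K) = K := by
    intro K
    by_cases hK : K = G.connectedComponentMk a
    · simp [rep, hK]
    · simp only [rep, if_neg hK]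
      exact Quot.out_eq K
  let φ : G.ConnectedComponent ⊕ Fin 2 → W := Sum.elim (f ∘ rep) ![f b, w₀]
  have hφ : Function.Surjective φ := by
    intro w
    rcases hcover w with ⟨x, rfl⟩ | rfl
    · obtain ⟨p⟩ : G.Reachable (rep (G.connectedComponentMk x)) x :=
        ConnectedComponent.exact (hrep _)
      rcases p.apply_eq_or_exists_mem (S := {a, b}) (by simpa using hf) with h | ⟨s, hs, h⟩
      · exact ⟨.inl _, h.symm⟩
      · rcases hs with rfl | rfl
        · exact ⟨.inl (G.connectedComponentMk s), by simp [φ, rep, h]⟩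
        · exact ⟨.inr 0, h.symm⟩
    · exact ⟨.inr 1, rfl⟩
  simpa using Nat.card_le_card_of_surjective φ hφ

end SimpleGraph

section

variable {ι : Type}

lemma extC_injective : Function.Injective (extC : (ι → ℕ) → Option ι → ℕ) :=
  fun _ _ h => funext fun i => congrFun h (some i)

lemma extC_ne_bPrime (x : ι → ℕ) : extC x ≠ bPrime :=
  fun h => absurd (congrFun h none) zero_ne_one

lemma extC_ne_extB' (x v : ι → ℕ) : extC x ≠ extB' v :=
  fun h => absurd (congrFun h none) zero_ne_one

lemma extB'_ne_bPrime {v : ι → ℕ} (hv : v ≠ 0) : extB' v ≠ bPrime := by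
  intro h
  obtain ⟨i, hi⟩ := Function.ne_iff.1 hv
  exact hi (congrFun h (some i))

def reactionVector (r : (ι → ℕ) × (ι → ℕ)) : ι → ℝ := fun i => (r.2 i : ℝ) - r.1 i

noncomputable def extendByZero : (ι → ℝ) →ₗ[ℝ] Option ι → ℝ :=
  Function.ExtendByZero.linearMap ℝ some

lemma extendByZero_injective : Function.Injective (extendByZero : (ι → ℝ) → Option ι → ℝ) :=
  Function.extend_injective (Option.some_injective ι) 0

lemma extendByZero_apply_none (w : ι → ℝ) : extendByZero w none = 0 :=
  Function.extend_apply' _ _ _ (by simp)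

lemma extendByZero_apply_some (w : ι → ℝ) (i : ι) : extendByZero w (some i) = w i :=
  (Option.some_injective ι).extend_apply _ _ _

lemma reactionVector_map_extC (s : (ι → ℕ) × (ι → ℕ)) :
    reactionVector (Prod.map extC extC s) = extendByZero (reactionVector s) := by
  ext (_ | i)
  · simp [reactionVector, extendByZero_apply_none, extC]
  · simp [reactionVector, extendByZero_apply_some, extC]

lemma reactionVector_add_reactionVector_bPrime (y u v : ι → ℕ) :
    reactionVector (extC y, extB' v) + reactionVector (bPrime, extC u) =
      extendByZero (reactionVector (y, u + v)) := by
  ext (_ | i)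
  · simp [reactionVector, extendByZero_apply_none, extC, extB', bPrime]
  · simp [reactionVector, extendByZero_apply_some, extC, extB', bPrime]
    ring

lemma reactionVector_bPrime_apply_none (u : ι → ℕ) :
    reactionVector (bPrime, extC u) none = -1 := by
  simp [reactionVector, extC, bPrime]

end

namespace CRN

variable {ι : Type} [DecidableEq ι]

noncomputable def stoichSubspace (R : CRN ι) : Submodule ℝ (ι → ℝ) :=
  Submodule.span ℝ (reactionVector '' ↑R.reactions)

lemma srank_eq_finrank_stoichSubspace (R : CRN ι) :
    R.srank = Module.finrank ℝ R.stoichSubspace := by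
  have : {w : ι → ℝ | ∃ r ∈ R.reactions, w = fun i => (r.2 i : ℝ) - r.1 i} =
      reactionVector '' ↑R.reactions :=
    Set.ext fun _ => ⟨fun ⟨r, hr, h⟩ => ⟨r, hr, h.symm⟩, fun ⟨r, hr, h⟩ => ⟨r, hr, h.symm⟩⟩
  rw [srank, stoichSubspace, this]

variable [Fintype ι] (R : CRN ι)

lemma fst_mem_complexes {r : (ι → ℕ) × (ι → ℕ)} (hr : r ∈ R.reactions) : r.1 ∈ R.complexes :=
  mem_union_left _ (mem_image_of_mem _ hr)

lemma snd_mem_complexes {r : (ι → ℕ) × (ι → ℕ)} (hr : r ∈ R.reactions) : r.2 ∈ R.complexes :=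
  mem_union_right _ (mem_image_of_mem _ hr)

lemma mem_complexes {c : ι → ℕ} : c ∈ R.complexes ↔ ∃ r ∈ R.reactions, r.1 = c ∨ r.2 = c := by
  simp only [complexes, mem_union, mem_image, ← exists_or, ← and_or_left]

lemma linkGraph_adj {a b : {c // c ∈ R.complexes}} :
    R.linkGraph.Adj a b ↔ a ≠ b ∧ ((a.1, b.1) ∈ R.reactions ∨ (b.1, a.1) ∈ R.reactions) :=
  SimpleGraph.fromRel_adj _ _ _

noncomputable def linkageClass (d : R.linkGraph.ConnectedComponent) (c : ι → ℕ) :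
    R.linkGraph.ConnectedComponent :=
  if h : c ∈ R.complexes then R.linkGraph.connectedComponentMk ⟨c, h⟩ else d

lemma linkageClass_of_mem {d : R.linkGraph.ConnectedComponent} {c : ι → ℕ}
    (h : c ∈ R.complexes) : R.linkageClass d c = R.linkGraph.connectedComponentMk ⟨c, h⟩ :=
  dif_pos h

lemma linkageClass_fst_eq_snd {d : R.linkGraph.ConnectedComponent} {r : (ι → ℕ) × (ι → ℕ)}
    (hr : r ∈ R.reactions) : R.linkageClass d r.1 = R.linkageClass d r.2 := by
  rw [linkageClass_of_mem _ (R.fst_mem_complexes hr),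
    linkageClass_of_mem _ (R.snd_mem_complexes hr)]
  by_cases h : r.1 = r.2
  · simp_rw [h]
  · exact SimpleGraph.ConnectedComponent.connectedComponentMk_eq_of_adj <|
      R.linkGraph_adj.2 ⟨fun h' => h (congrArg Subtype.val h'), Or.inl hr⟩

/-- The reaction `y → u + v` routed through the new species `B' = none`: it is replaced by
`y → B' + v` and `B' → u`. -/
def splitThrough (y u v : ι → ℕ) : CRN (Option ι) :=
  ⟨(R.reactions.erase (y, u + v)).image (Prod.map extC extC) ∪
    {(extC y, extB' v), (bPrime, extC u)}⟩

lemma signFixCRN_eq_splitThrough (A B : ι) (p₁ p₂ : ℕ) (C₁ C₂ : ι → ℕ) :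
    signFixCRN R A B p₁ p₂ C₁ C₂ = R.splitThrough (fun i => mono A p₁ i + C₁ i) (mono B p₂) C₂ :=
  rfl

variable {R} {y u v : ι → ℕ}

lemma mem_splitThrough_reactions {r : (Option ι → ℕ) × (Option ι → ℕ)} :
    r ∈ (R.splitThrough y u v).reactions ↔
      (∃ s ∈ R.reactions, s ≠ (y, u + v) ∧ Prod.map extC extC s = r) ∨
        r = (extC y, extB' v) ∨ r = (bPrime, extC u) := by
  simp only [splitThrough, mem_union, mem_image, mem_erase, mem_insert, mem_singleton, and_assoc,
    and_left_comm (a := _ ∈ R.reactions)]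

lemma map_extC_mem_splitThrough {s : (ι → ℕ) × (ι → ℕ)} (hs : s ∈ R.reactions)
    (hne : s ≠ (y, u + v)) : Prod.map extC extC s ∈ (R.splitThrough y u v).reactions :=
  mem_splitThrough_reactions.2 (Or.inl ⟨s, hs, hne, rfl⟩)

lemma source_mem_splitThrough : (extC y, extB' v) ∈ (R.splitThrough y u v).reactions :=
  mem_splitThrough_reactions.2 (Or.inr (Or.inl rfl))

lemma bPrime_mem_splitThrough : (bPrime, extC u) ∈ (R.splitThrough y u v).reactions :=
  mem_splitThrough_reactions.2 (Or.inr (Or.inr rfl))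

lemma extC_mem_complexes_splitThrough {x : ι → ℕ} (hx : x ∈ R.complexes) (hne : x ≠ u + v) :
    extC x ∈ (R.splitThrough y u v).complexes := by
  obtain ⟨s, hs, hsx⟩ := R.mem_complexes.1 hx
  by_cases hs₀ : s = (y, u + v)
  · subst hs₀
    rcases hsx with rfl | rfl
    · exact fst_mem_complexes _ source_mem_splitThrough
    · exact absurd rfl hne
  · exact (mem_complexes _).2
      ⟨_, map_extC_mem_splitThrough hs hs₀, by rcases hsx with rfl | rfl <;> simp⟩

lemma mem_complexes_splitThrough {w : Option ι → ℕ} (hr : (y, u + v) ∈ R.reactions)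
    (hw : w ∈ (R.splitThrough y u v).complexes) :
    (∃ x ∈ R.complexes, extC x = w) ∨ w = extB' v ∨ w = bPrime ∨ w = extC u := by
  obtain ⟨r, hr', hrw⟩ := (mem_complexes _).1 hw
  rcases mem_splitThrough_reactions.1 hr' with ⟨s, hs, -, rfl⟩ | rfl | rfl
  · rcases hrw with rfl | rfl
    · exact Or.inl ⟨s.1, fst_mem_complexes _ hs, rfl⟩
    · exact Or.inl ⟨s.2, snd_mem_complexes _ hs, rfl⟩
  · rcases hrw with rfl | rfl
    · exact Or.inl ⟨y, fst_mem_complexes _ hr, rfl⟩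
    · exact Or.inr (Or.inl rfl)
  · rcases hrw with rfl | rfl
    · exact Or.inr (Or.inr (Or.inl rfl))
    · exact Or.inr (Or.inr (Or.inr rfl))

lemma numComplexes_splitThrough_le (hr : (y, u + v) ∈ R.reactions) :
    (R.splitThrough y u v).numComplexes ≤ R.numComplexes + 3 := by
  have hsub : (R.splitThrough y u v).complexes ⊆
      {extB' v, bPrime, extC u} ∪ R.complexes.image extC := by
    intro w hw
    rcases mem_complexes_splitThrough hr hw with ⟨x, hx, rfl⟩ | rfl | rfl | rfl
    · exact mem_union_right _ (mem_image_of_mem _ hx)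
    all_goals simp
  calc (R.splitThrough y u v).numComplexes
      ≤ #{extB' v, bPrime, extC u} + #(R.complexes.image extC) :=
        (card_le_card hsub).trans (card_union_le _ _)
    _ ≤ R.numComplexes + 3 := by
        rw [add_comm]
        exact add_le_add card_image_le card_le_three

variable (R y u v) in
lemma numComplexes_lt_splitThrough :
    R.numComplexes < (R.splitThrough y u v).numComplexes := by
  set old := (R.complexes.erase (u + v)).image extC
  have hbPrime : bPrime ∉ old := by
    simp only [old, mem_image, not_exists, not_and]
    exact fun x _ => extC_ne_bPrime x
  obtain ⟨z, hz, hzb, hzold⟩ : ∃ z ∈ (R.splitThrough y u v).complexes, z ≠ bPrime ∧ z ∉ old := by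
    by_cases hv : v = 0
    · subst hv
      refine ⟨extC u, snd_mem_complexes _ bPrime_mem_splitThrough, extC_ne_bPrime u, ?_⟩
      simp only [old, mem_image, mem_erase, add_zero, not_exists, not_and]
      exact fun x hx h => hx.1 (extC_injective h)
    · refine ⟨extB' v, snd_mem_complexes _ source_mem_splitThrough, extB'_ne_bPrime hv, ?_⟩
      simp only [old, mem_image, not_exists, not_and]
      exact fun x _ => extC_ne_extB' x v
  have hsub : insert z (insert bPrime old) ⊆ (R.splitThrough y u v).complexes := by
    intro w hw
    rcases mem_insert.1 hw with rfl | hw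
    · exact hz
    rcases mem_insert.1 hw with rfl | hw
    · exact fst_mem_complexes _ bPrime_mem_splitThrough
    obtain ⟨x, hx, rfl⟩ := mem_image.1 hw
    exact extC_mem_complexes_splitThrough (mem_of_mem_erase hx) (ne_of_mem_erase hx)
  have hcard := card_le_card hsub
  rw [card_insert_of_notMem (by simpa [hzb] using hzold), card_insert_of_notMem hbPrime,
    card_image_of_injective _ extC_injective] at hcard
  have := pred_card_le_card_erase (s := R.complexes) (a := u + v)
  unfold numComplexes
  omega

lemma stoichSubspace_splitThrough (hr : (y, u + v) ∈ R.reactions) :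
    (R.splitThrough y u v).stoichSubspace =
      R.stoichSubspace.map extendByZero ⊔ Submodule.span ℝ {reactionVector (bPrime, extC u)} := by
  have hold : ∀ s ∈ R.reactions,
      extendByZero (reactionVector s) ∈ R.stoichSubspace.map extendByZero :=
    fun s hs => Submodule.mem_map_of_mem (Submodule.subset_span (Set.mem_image_of_mem _ hs))
  have hsum := reactionVector_add_reactionVector_bPrime y u v
  apply le_antisymm
  · rw [stoichSubspace, Submodule.span_le]
    rintro _ ⟨r, hr', rfl⟩
    rcases mem_splitThrough_reactions.1 hr' with ⟨s, hs, -, rfl⟩ | rfl | rfl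
    · rw [reactionVector_map_extC]
      exact Submodule.mem_sup_left (hold s hs)
    · rw [eq_sub_of_add_eq hsum]
      exact Submodule.sub_mem _ (Submodule.mem_sup_left (hold _ hr))
        (Submodule.mem_sup_right (Submodule.mem_span_singleton_self _))
    · exact Submodule.mem_sup_right (Submodule.mem_span_singleton_self _)
  · have hnew : ∀ r ∈ (R.splitThrough y u v).reactions,
        reactionVector r ∈ (R.splitThrough y u v).stoichSubspace :=
      fun r hr' => Submodule.subset_span (Set.mem_image_of_mem _ hr')
    refine sup_le ?_ ((Submodule.span_singleton_le_iff_mem _ _).2 (hnew _ bPrime_mem_splitThrough))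
    rw [stoichSubspace, Submodule.map_span, Submodule.span_le]
    rintro _ ⟨_, ⟨s, hs, rfl⟩, rfl⟩
    by_cases hs₀ : s = (y, u + v)
    · subst hs₀
      rw [← hsum]
      exact Submodule.add_mem _ (hnew _ source_mem_splitThrough) (hnew _ bPrime_mem_splitThrough)
    · rw [← reactionVector_map_extC]
      exact hnew _ (map_extC_mem_splitThrough hs hs₀)

lemma srank_splitThrough (hr : (y, u + v) ∈ R.reactions) :
    (R.splitThrough y u v).srank = R.srank + 1 := by
  have hB' : reactionVector (bPrime, extC u) ∉ R.stoichSubspace.map extendByZero := by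
    rintro ⟨w, -, hw⟩
    have := congrFun hw none
    rw [extendByZero_apply_none, reactionVector_bPrime_apply_none] at this
    norm_num at this
  rw [srank_eq_finrank_stoichSubspace, srank_eq_finrank_stoichSubspace,
    stoichSubspace_splitThrough hr, Submodule.finrank_sup_span_singleton hB',
    (Submodule.equivMapOfInjective _ extendByZero_injective _).finrank_eq.symm]

lemma numLinkage_splitThrough_le (hr : (y, u + v) ∈ R.reactions) :
    (R.splitThrough y u v).numLinkage ≤ R.numLinkage + 2 := by
  set R₂ := R.splitThrough y u v
  set w₀ :=
    R₂.linkGraph.connectedComponentMk ⟨bPrime, fst_mem_complexes _ bPrime_mem_splitThrough⟩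
  have hw₀ : R₂.linkageClass w₀ bPrime = w₀ := linkageClass_of_mem _ _
  refine SimpleGraph.card_le_card_connectedComponent_add_two (G := R.linkGraph)
    (f := fun x => R₂.linkageClass w₀ (extC x.1)) (a := ⟨y, fst_mem_complexes _ hr⟩)
    (b := ⟨u + v, snd_mem_complexes _ hr⟩) (w₀ := w₀) ?_ ?_
  · intro x x' hxx' hy huv
    obtain ⟨-, h | h⟩ := R.linkGraph_adj.1 hxx'
    · refine R₂.linkageClass_fst_eq_snd (map_extC_mem_splitThrough h ?_)
      exact fun h' => huv (Subtype.ext (congrArg Prod.snd h'))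
    · refine (R₂.linkageClass_fst_eq_snd (map_extC_mem_splitThrough h ?_)).symm
      exact fun h' => hy (Subtype.ext (congrArg Prod.fst h'))
  · refine SimpleGraph.ConnectedComponent.ind fun ⟨w, hw⟩ => ?_
    rw [← linkageClass_of_mem (d := w₀)]
    rcases mem_complexes_splitThrough hr hw with ⟨x, hx, rfl⟩ | rfl | rfl | rfl
    · exact Or.inl ⟨⟨x, hx⟩, rfl⟩
    · exact Or.inl
        ⟨⟨y, fst_mem_complexes _ hr⟩, R₂.linkageClass_fst_eq_snd source_mem_splitThrough⟩
    · exact Or.inr hw₀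
    · exact Or.inr ((R₂.linkageClass_fst_eq_snd bPrime_mem_splitThrough).symm.trans hw₀)

end CRN

theorem signFixCRN_complexes_linkage_rank_general {d : ℕ} (N₁ : CRN (Fin d))
    (A B : Fin d)
    (p₁ p₂ : ℕ)
    (C₁ C₂ : Fin d → ℕ)
    (hr₁ : ((fun i => mono A p₁ i + C₁ i), (fun i => mono B p₂ i + C₂ i))
      ∈ N₁.reactions) :
    (signFixCRN N₁ A B p₁ p₂ C₁ C₂).srank = N₁.srank + 1 ∧
    1 ≤ ((signFixCRN N₁ A B p₁ p₂ C₁ C₂).numComplexes : ℤ) - N₁.numComplexes ∧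
    ((signFixCRN N₁ A B p₁ p₂ C₁ C₂).numComplexes : ℤ) - N₁.numComplexes ≤ 3 ∧
    ((signFixCRN N₁ A B p₁ p₂ C₁ C₂).numLinkage : ℤ) - N₁.numLinkage ≤ 2 := by
  have hr : ((fun i => mono A p₁ i + C₁ i), mono B p₂ + C₂) ∈ N₁.reactions := hr₁
  rw [CRN.signFixCRN_eq_splitThrough]
  refine ⟨CRN.srank_splitThrough hr, ?_, ?_, ?_⟩
  · have := CRN.numComplexes_lt_splitThrough N₁ (fun i => mono A p₁ i + C₁ i) (mono B p₂) C₂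
    omega
  · have := CRN.numComplexes_splitThrough_le hr
    omega
  · have := CRN.numLinkage_splitThrough_le hr
    omega

/-- One application of the sign fixing algorithm to the bad submatrix given by
the reactions `p₁A + C₁ → p₂B + C₂` and `p₃A + p₄B + C₃ → C₄` satisfies
`Δs = 1`, `1 ≤ Δn ≤ 3` and `Δℓ ≤ 2`. -/
theorem signFixCRN_complexes_linkage_rank {d : ℕ} (N₁ : CRN (Fin d))
    (A B : Fin d) (hAB : A ≠ B)
    (p₁ p₂ p₃ p₄ : ℕ) (hp₁ : 0 < p₁) (hp₂ : 0 < p₂) (hp₃ : 0 < p₃) (hp₄ : 0 < p₄)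
    (C₁ C₂ C₃ C₄ : Fin d → ℕ)
    (hC₁ : C₁ A = 0 ∧ C₁ B = 0) (hC₂ : C₂ A = 0 ∧ C₂ B = 0)
    (hC₃ : C₃ A = 0 ∧ C₃ B = 0) (hC₄ : C₄ A = 0 ∧ C₄ B = 0)
    (hr₁ : ((fun i => mono A p₁ i + C₁ i), (fun i => mono B p₂ i + C₂ i))
      ∈ N₁.reactions)
    (hr₂ : ((fun i => mono A p₃ i + mono B p₄ i + C₃ i), C₄) ∈ N₁.reactions) :
    (signFixCRN N₁ A B p₁ p₂ C₁ C₂).srank = N₁.srank + 1 ∧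
    1 ≤ ((signFixCRN N₁ A B p₁ p₂ C₁ C₂).numComplexes : ℤ) - N₁.numComplexes ∧
    ((signFixCRN N₁ A B p₁ p₂ C₁ C₂).numComplexes : ℤ) - N₁.numComplexes ≤ 3 ∧
    ((signFixCRN N₁ A B p₁ p₂ C₁ C₂).numLinkage : ℤ) - N₁.numLinkage ≤ 2 :=
  signFixCRN_complexes_linkage_rank_general N₁ A B p₁ p₂ C₁ C₂ hr₁
end
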